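/- arXiv:0812.2602 — 2 statements merged into one kernel-verified Lean document; each statement's English description precedes it below -/
import Mathlib

section
/- Let D be a dictionary of N unit vectors in ℂ^p with N > p. Then the coherence of D satisfies max_{φ≠ψ} |⟨φ,ψ⟩|² ≥ (N−p)/(p(N−1)); in particular, if D is μ-coherent (|⟨φ,ψ⟩| ≤ μ/√p for distinct atoms), then μ² ≥ (N−p)/(N−1). -/
/-!
For vectors `v i` in a `d`-dimensional space, write their coordinates as the columns of a
`d × N` matrix `M`. The Gram matrix `Mᴴ * M` and the frame operator `M * Mᴴ` have the same
Frobenius norm, and Cauchy–Schwarz on the `d` diagonal entries of `M * Mᴴ`, whose sum is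
`∑ ‖v i‖ ^ 2`, bounds that norm below by `(∑ ‖v i‖ ^ 2) ^ 2 / d`. For unit vectors the diagonal
of the Gram matrix contributes `N`, so the `N (N - 1)` off-diagonal terms sum to at least
`N ^ 2 / d - N`, and one of them is at least their average `(N - d) / (d (N - 1))`.
-/

open Finset Matrix Module RCLike

namespace Matrix

variable {𝕜 m n : Type*} [RCLike 𝕜] [Fintype m] [Fintype n]

theorem sum_sum_norm_sq_eq_re_trace_mul_conjTranspose (B : Matrix m n 𝕜) :
    ∑ i, ∑ j, ‖B i j‖ ^ 2 = re (B * Bᴴ).trace := by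
  simp [trace, mul_apply, RCLike.mul_conj]

theorem sum_sum_norm_sq_conjTranspose_mul_self (A : Matrix m n 𝕜) :
    ∑ i, ∑ j, ‖(Aᴴ * A) i j‖ ^ 2 = ∑ a, ∑ b, ‖(A * Aᴴ) a b‖ ^ 2 := by
  simp only [sum_sum_norm_sq_eq_re_trace_mul_conjTranspose, conjTranspose_mul,
    conjTranspose_conjTranspose, Matrix.mul_assoc]
  rw [trace_mul_comm Aᴴ]
  simp only [Matrix.mul_assoc]

theorem norm_trace_sq_le_card_mul_sum_sum_norm_sq (S : Matrix n n 𝕜) :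
    ‖S.trace‖ ^ 2 ≤ Fintype.card n * ∑ a, ∑ b, ‖S a b‖ ^ 2 :=
  calc ‖S.trace‖ ^ 2 ≤ (∑ a, ‖S a a‖) ^ 2 := by
        gcongr; exact norm_sum_le _ _
    _ ≤ Fintype.card n * ∑ a, ‖S a a‖ ^ 2 := sq_sum_le_card_mul_sum_sq
    _ ≤ Fintype.card n * ∑ a, ∑ b, ‖S a b‖ ^ 2 := by
        gcongr with a
        exact single_le_sum (f := fun b => ‖S a b‖ ^ 2) (fun _ _ => by positivity) (mem_univ a)

end Matrix

theorem Fintype.sum_sum_eq_sum_add_sum_offDiag {ι M : Type*} [Fintype ι] [DecidableEq ι]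
    [AddCommMonoid M] (f : ι → ι → M) :
    ∑ i, ∑ j, f i j = ∑ i, f i i + ∑ x ∈ univ.offDiag, f x.1 x.2 := by
  rw [← sum_diag univ (fun x => f x.1 x.2), ← sum_union (disjoint_diag_offDiag _),
    diag_union_offDiag, sum_product]

section InnerProductSpace

variable {𝕜 E ι : Type*} [RCLike 𝕜] [NormedAddCommGroup E] [InnerProductSpace 𝕜 E]
  [FiniteDimensional 𝕜 E] [Fintype ι]

theorem finrank_pos_of_norm_eq_one {x : E} (hx : ‖x‖ = 1) : 0 < finrank 𝕜 E :=
  finrank_pos_iff_exists_ne_zero.2 ⟨x, ne_zero_of_norm_ne_zero (by simp [hx])⟩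

theorem sq_sum_norm_sq_le_finrank_mul_sum_sum_norm_inner_sq (v : ι → E) :
    (∑ i, ‖v i‖ ^ 2) ^ 2 ≤ finrank 𝕜 E * ∑ i, ∑ j, ‖inner 𝕜 (v i) (v j)‖ ^ 2 := by
  set M : Matrix (Fin (finrank 𝕜 E)) ι 𝕜 :=
    of fun a i => stdOrthonormalBasis 𝕜 E |>.repr (v i) a
  have hgram : gram 𝕜 v = Mᴴ * M := gram_eq_conjTranspose_mul _ v
  have htrace : (M * Mᴴ).trace = ((∑ i, ‖v i‖ ^ 2 : ℝ) : 𝕜) := by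
    rw [trace_mul_comm, ← hgram]
    simp [trace, gram_apply, inner_self_eq_norm_sq_to_K]
  calc (∑ i, ‖v i‖ ^ 2) ^ 2 = ‖(M * Mᴴ).trace‖ ^ 2 := by
        rw [htrace, norm_of_nonneg (by positivity)]
    _ ≤ finrank 𝕜 E * ∑ a, ∑ b, ‖(M * Mᴴ) a b‖ ^ 2 := by
        simpa using norm_trace_sq_le_card_mul_sum_sum_norm_sq (M * Mᴴ)
    _ = finrank 𝕜 E * ∑ i, ∑ j, ‖inner 𝕜 (v i) (v j)‖ ^ 2 := by
        rw [← sum_sum_norm_sq_conjTranspose_mul_self, ← hgram]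
        simp [gram_apply]

theorem exists_ne_welch_le_norm_inner_sq {v : ι → E} (hv : ∀ i, ‖v i‖ = 1)
    (hd : finrank 𝕜 E < Fintype.card ι) :
    ∃ i j, i ≠ j ∧
      ((Fintype.card ι : ℝ) - finrank 𝕜 E) / (finrank 𝕜 E * ((Fintype.card ι : ℝ) - 1))
        ≤ ‖inner 𝕜 (v i) (v j)‖ ^ 2 := by
  classical
  set n := Fintype.card ι
  set d := finrank 𝕜 E
  set S := ∑ x ∈ univ.offDiag, ‖inner 𝕜 (v x.1) (v x.2)‖ ^ 2
  obtain ⟨a⟩ : Nonempty ι := Fintype.card_pos_iff.1 (by omega)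
  have hd0 : 0 < d := finrank_pos_of_norm_eq_one (hv a)
  have hframe : (n : ℝ) ^ 2 ≤ d * (n + S) := by
    simpa [hv, Fintype.sum_sum_eq_sum_add_sum_offDiag, inner_self_eq_norm_sq_to_K] using
      sq_sum_norm_sq_le_finrank_mul_sum_sum_norm_inner_sq (𝕜 := 𝕜) v
  have hn : (1 : ℝ) < n := by exact_mod_cast (by omega : 1 < n)
  have hoff : ∑ _x ∈ (univ : Finset ι).offDiag, ((n : ℝ) - d) / (d * ((n : ℝ) - 1)) ≤ S := by
    rw [sum_const, offDiag_card, nsmul_eq_mul, card_univ, Nat.cast_sub (Nat.le_mul_self n)]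
    push_cast
    rw [← mul_div_assoc, div_le_iff₀ (by positivity)]
    nlinarith
  obtain ⟨a, b, hab⟩ := Fintype.exists_pair_of_one_lt_card (by omega : 1 < n)
  obtain ⟨⟨i, j⟩, hij, hle⟩ :=
    exists_le_of_sum_le ⟨(a, b), mem_offDiag.2 ⟨mem_univ a, mem_univ b, hab⟩⟩ hoff
  exact ⟨i, j, (mem_offDiag.1 hij).2.2, hle⟩

end InnerProductSpace

theorem welch_bound_general
    {p N : ℕ} (hN : p < N) {ι : Type*} [Fintype ι]
    (hcard : Fintype.card ι = N)
    (D : ι → EuclideanSpace ℂ (Fin p)) (hD : ∀ i, ‖D i‖ = 1) :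
    (∃ i j, i ≠ j ∧ ((N : ℝ) - p) / (p * ((N : ℝ) - 1)) ≤ ‖(inner ℂ (D i) (D j) : ℂ)‖ ^ 2) ∧
    ∀ μ : ℝ, (∀ i j, i ≠ j → ‖(inner ℂ (D i) (D j) : ℂ)‖ ≤ μ / Real.sqrt p) →
      ((N : ℝ) - p) / ((N : ℝ) - 1) ≤ μ ^ 2 := by
  have hdim : finrank ℂ (EuclideanSpace ℂ (Fin p)) = p := finrank_euclideanSpace_fin
  obtain ⟨i, j, hij, hwelch⟩ := exists_ne_welch_le_norm_inner_sq hD (by rwa [hdim, hcard])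
  rw [hdim, hcard] at hwelch
  refine ⟨⟨i, j, hij, hwelch⟩, fun μ hμ => ?_⟩
  have hp : 0 < p := hdim ▸ finrank_pos_of_norm_eq_one (hD i)
  have hp' : (0 : ℝ) < p := by exact_mod_cast hp
  have hN1 : (N : ℝ) - 1 ≠ 0 := sub_ne_zero.2 (by exact_mod_cast (by omega : 1 < N).ne')
  have hcoh : ‖(inner ℂ (D i) (D j) : ℂ)‖ ^ 2 ≤ μ ^ 2 / p := by
    rw [← Real.sq_sqrt hp'.le, ← div_pow]
    exact pow_le_pow_left₀ (norm_nonneg _) (hμ i j hij) 2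
  calc ((N : ℝ) - p) / ((N : ℝ) - 1) = p * (((N : ℝ) - p) / (p * ((N : ℝ) - 1))) := by
        field_simp
    _ ≤ p * (μ ^ 2 / p) := mul_le_mul_of_nonneg_left (hwelch.trans hcoh) hp'.le
    _ = μ ^ 2 := by field_simp

/-- Welch bound: `N` unit vectors in `ℂ^p` with `N > p` have coherence at least
`√((N−p)/(p(N−1)))`; in particular a μ-coherent dictionary has `μ² ≥ (N−p)/(N−1)`. -/
theorem welch_bound
    {p N : ℕ} (hp : 0 < p) (hN : p < N) {ι : Type*} [Fintype ι]
    (hcard : Fintype.card ι = N)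
    (D : ι → EuclideanSpace ℂ (Fin p)) (hD : ∀ i, ‖D i‖ = 1) :
    (∃ i j, i ≠ j ∧ ((N : ℝ) - p) / (p * ((N : ℝ) - 1)) ≤ ‖(inner ℂ (D i) (D j) : ℂ)‖ ^ 2) ∧
    ∀ μ : ℝ, (∀ i j, i ≠ j → ‖(inner ℂ (D i) (D j) : ℂ)‖ ≤ μ / Real.sqrt p) →
      ((N : ℝ) - p) / ((N : ℝ) - 1) ≤ μ ^ 2 :=
  welch_bound_general hN hcard D hD
end

section
/- Let D ⊆ ℂ^p be a μ-coherent dictionary and suppose f ∈ ℂ(D) is supported on a set S with |S| = n, where (2n−1)·μ/√p < 1. If Θ(f) = Θ(g) for another function g supported on a set of size at most n, then f = g. (Uniqueness of n-sparse representations under the coherence condition.) -/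
/-! Put `h = f - g`, supported on `U = S ∪ T` with `|U| ≤ 2n`, and `∑ h i • D i = 0`.
Pairing this relation with the atom `D j` of a coefficient of maximal modulus isolates `h j`
(diagonal dominance of the Gram matrix of `U`): `‖h j‖ ≤ (|U| - 1) (μ/√p) ‖h j‖`, and the
coherence condition forces `h j = 0`, hence `h = 0`. -/

open Finset

section Coherence

variable {𝕜 E ι : Type*} [RCLike 𝕜] [NormedAddCommGroup E] [InnerProductSpace 𝕜 E]
  [DecidableEq ι] {D : ι → E} {c : ℝ} {U : Finset ι} {a : ι → 𝕜} {j : ι}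

theorem coeff_eq_neg_sum_inner_of_sum_smul_eq_zero (hDj : ‖D j‖ = 1) (hj : j ∈ U)
    (h0 : ∑ i ∈ U, a i • D i = 0) :
    a j = -∑ i ∈ U.erase j, a i * inner 𝕜 (D j) (D i) := by
  have h := congrArg (inner 𝕜 (D j)) h0
  simp only [inner_sum, inner_smul_right, inner_zero_right] at h
  rw [← add_sum_erase _ _ hj, inner_self_eq_norm_sq_to_K, hDj] at h
  simpa [mul_comm] using eq_neg_of_add_eq_zero_left h

theorem norm_coeff_le_of_sum_smul_eq_zero (hDj : ‖D j‖ = 1)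
    (hcoh : ∀ i j, i ≠ j → ‖(inner 𝕜 (D i) (D j) : 𝕜)‖ ≤ c) (hj : j ∈ U)
    (hmax : ∀ i ∈ U, ‖a i‖ ≤ ‖a j‖) (h0 : ∑ i ∈ U, a i • D i = 0) :
    ‖a j‖ ≤ (#U - 1) * c * ‖a j‖ :=
  calc ‖a j‖ = ‖∑ i ∈ U.erase j, a i * inner 𝕜 (D j) (D i)‖ := by
        rw [coeff_eq_neg_sum_inner_of_sum_smul_eq_zero hDj hj h0, norm_neg]
    _ ≤ ∑ i ∈ U.erase j, ‖a i‖ * ‖inner 𝕜 (D j) (D i)‖ := by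
        simpa only [norm_mul] using norm_sum_le (U.erase j) fun i ↦ a i * inner 𝕜 (D j) (D i)
    _ ≤ ∑ _i ∈ U.erase j, ‖a j‖ * c := by
        refine sum_le_sum fun i hi ↦ ?_
        obtain ⟨hij, hiU⟩ := mem_erase.mp hi
        exact mul_le_mul (hmax i hiU) (hcoh j i (Ne.symm hij)) (norm_nonneg _) (norm_nonneg _)
    _ = (#U - 1) * c * ‖a j‖ := by
        rw [sum_const, card_erase_of_mem hj, nsmul_eq_mul, Nat.cast_sub (card_pos.mpr ⟨j, hj⟩)]
        ring

theorem eq_zero_of_sum_smul_eq_zero (hD : ∀ i, ‖D i‖ = 1)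
    (hcoh : ∀ i j, i ≠ j → ‖(inner 𝕜 (D i) (D j) : 𝕜)‖ ≤ c) {m : ℕ} (hUm : #U ≤ m)
    (hm : (m - 1 : ℝ) * c < 1) (h0 : ∑ i ∈ U, a i • D i = 0) :
    ∀ i ∈ U, a i = 0 := by
  rcases U.eq_empty_or_nonempty with rfl | hU
  · simp
  obtain ⟨j, hj, hmax⟩ := exists_max_image U (fun i ↦ ‖a i‖) hU
  have hUc : (#U - 1 : ℝ) * c < 1 := by
    have h1 : (1 : ℝ) ≤ #U := by exact_mod_cast card_pos.mpr hU
    have h2 : (#U : ℝ) ≤ m := by exact_mod_cast hUm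
    rcases le_total 0 c with hc | hc <;> nlinarith
  have hj0 : ‖a j‖ ≤ 0 := by
    nlinarith [norm_coeff_le_of_sum_smul_eq_zero (hD j) hcoh hj hmax h0, norm_nonneg (a j)]
  exact fun i hi ↦ norm_le_zero_iff.mp ((hmax i hi).trans hj0)

end Coherence

theorem sparse_representation_unique_general
    {p n : ℕ} {ι : Type*} [Fintype ι] [DecidableEq ι]
    (D : ι → EuclideanSpace ℂ (Fin p)) (hD : ∀ i, ‖D i‖ = 1)
    (μ : ℝ) (hμ : ∀ i j, i ≠ j → ‖(inner ℂ (D i) (D j) : ℂ)‖ ≤ μ / Real.sqrt p)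
    (hsmall : (2 * (n : ℝ) - 1) * μ / Real.sqrt p < 1)
    (f g : ι → ℂ) (S T : Finset ι)
    (hSn : S.card = n) (hTn : T.card ≤ n)
    (hfS : ∀ i ∉ S, f i = 0) (hgT : ∀ i ∉ T, g i = 0)
    (hΘ : ∑ i, f i • D i = ∑ i, g i • D i) :
    f = g := by
  have hcard : #(S ∪ T) ≤ 2 * n := by
    have := card_union_le S T
    omega
  have hsupp : ∀ i ∉ S ∪ T, f i - g i = 0 := fun i hi ↦ by
    rw [mem_union, not_or] at hi
    rw [hfS i hi.1, hgT i hi.2, sub_self]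
  have h0 : ∑ i ∈ S ∪ T, (f i - g i) • D i = 0 := by
    rw [sum_subset (subset_univ _) fun i _ hi ↦ by rw [hsupp i hi, zero_smul]]
    simp only [sub_smul, sum_sub_distrib, hΘ, sub_self]
  have hsmall' : ((2 * n : ℕ) - 1 : ℝ) * (μ / Real.sqrt p) < 1 := by
    rwa [← mul_div_assoc, Nat.cast_mul, Nat.cast_two]
  have hzero := eq_zero_of_sum_smul_eq_zero hD hμ hcard hsmall' h0
  funext i
  by_cases hi : i ∈ S ∪ T
  · exact sub_eq_zero.mp (hzero i hi)
  · exact sub_eq_zero.mp (hsupp i hi)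

/-- Uniqueness of sparse representations in a μ-coherent dictionary: if
`(2n−1)μ/√p < 1` and `f`, `g` are supported on sets of size `n` and at most `n`
respectively with `Θ f = Θ g`, then `f = g`. -/
theorem sparse_representation_unique
    {p n : ℕ} (hp : 0 < p) {ι : Type*} [Fintype ι] [DecidableEq ι]
    (D : ι → EuclideanSpace ℂ (Fin p)) (hD : ∀ i, ‖D i‖ = 1)
    (μ : ℝ) (hμ : ∀ i j, i ≠ j → ‖(inner ℂ (D i) (D j) : ℂ)‖ ≤ μ / Real.sqrt p)
    (hsmall : (2 * (n : ℝ) - 1) * μ / Real.sqrt p < 1)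
    (f g : ι → ℂ) (S T : Finset ι)
    (hSn : S.card = n) (hTn : T.card ≤ n)
    (hfS : ∀ i ∉ S, f i = 0) (hgT : ∀ i ∉ T, g i = 0)
    (hΘ : ∑ i, f i • D i = ∑ i, g i • D i) :
    f = g :=
  sparse_representation_unique_general D hD μ hμ hsmall f g S T hSn hTn hfS hgT hΘ
end
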